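/- Let ω : ℝ³ → ℝ³ be continuously differentiable with ∇·ω = 0, and let x : [0,L] → ℝ³ (L > 0) be an arclength parameterization of a vortex line segment: x'(s) = ξ(x(s)) for all s, where ξ = ω/|ω|, and ω(x(s)) ≠ 0 for all s ∈ [0,L]. Then: (i) for all 0 ≤ s₁ ≤ s₂ ≤ L, |ω(x(s₂))| = |ω(x(s₁))| · exp( −∫_{s₁}^{s₂} (∇·ξ)(x(s)) ds ); and (ii) if ∫₀^{L} |(∇·ξ)(x(s))| ds ≤ C₀, then max_{s∈[0,L]} |ω(x(s))| ≤ e^{C₀} · min_{s∈[0,L]} |ω(x(s))| ≤ e^{C₀} · (1/L)∫₀^{L} |ω(x(s))| ds. (Deng–Hou–Yu's Lemma 1 identity and the paper's inequality (2.20).) -/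

import Mathlib

open Real MeasureTheory intervalIntegral Set

noncomputable section

/-- Three-dimensional Euclidean space. -/
abbrev E3 := EuclideanSpace ℝ (Fin 3)

/-- Partial derivative of a scalar function in the `j`-th coordinate direction. -/
def pd3 (f : E3 → ℝ) (y : E3) (j : Fin 3) : ℝ := fderiv ℝ f y (EuclideanSpace.single j 1)

/-- Divergence of a vector field on `E3`. -/
def div3 (v : E3 → E3) (y : E3) : ℝ := ∑ j, pd3 (fun z => v z j) y j

/-!
Since `ω = |ω| ξ` is divergence free, the product rule `∇·(φ v) = φ ∇·v + ∇φ·v` gives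
`ξ·∇|ω| = -(∇·ξ)|ω|` wherever `ω ≠ 0`. Along the vortex line `x' = ξ(x)`, so
`log |ω(x(s))|` has derivative `-(∇·ξ)(x(s))`, and integrating gives (i). By (i) any two values
of `|ω|` on the segment differ by a factor at most `exp ∫₀^L |∇·ξ| ≤ e^{C₀}`, whence
`max ≤ e^{C₀} min`; the minimum of a continuous function is at most its average.
-/

theorem div3_smul {φ : E3 → ℝ} {v : E3 → E3} {y : E3}
    (hφ : DifferentiableAt ℝ φ y) (hv : DifferentiableAt ℝ v y) :
    div3 (fun z => φ z • v z) y = φ y * div3 v y + fderiv ℝ φ y (v y) := by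
  have hcoord : ∀ j : Fin 3, pd3 (fun z => (φ z • v z) j) y j
      = φ y * pd3 (fun z => v z j) y j + v y j * fderiv ℝ φ y (EuclideanSpace.single j 1) := by
    intro j
    have hvj : DifferentiableAt ℝ (fun z => v z j) y :=
      (EuclideanSpace.proj (𝕜 := ℝ) j).differentiableAt.comp y hv
    simp only [pd3, PiLp.smul_apply, smul_eq_mul, fderiv_fun_mul hφ hvj]
    simp
  have hexpand : v y = ∑ j, v y j • EuclideanSpace.single j (1 : ℝ) := by
    simpa using ((EuclideanSpace.basisFun (Fin 3) ℝ).sum_repr (v y)).symm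
  rw [div3, div3, Finset.sum_congr rfl fun j _ => hcoord j, Finset.sum_add_distrib,
    Finset.mul_sum]
  conv_rhs => rw [hexpand, map_sum]
  simp

theorem continuousAt_div3 {v : E3 → E3} {y : E3} (hv : ContDiffAt ℝ 1 v y) :
    ContinuousAt (div3 v) y := by
  refine tendsto_finsetSum _ fun j _ => ?_
  have hvj : ContDiffAt ℝ 1 (fun z => v z j) y :=
    (EuclideanSpace.proj (𝕜 := ℝ) j).contDiff.contDiffAt.comp y hv
  exact (hvj.continuousAt_fderiv one_ne_zero).clm_apply continuousAt_const

theorem contDiffAt_inv_norm_smul {E F : Type*} [NormedAddCommGroup E] [NormedSpace ℝ E]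
    [NormedAddCommGroup F] [InnerProductSpace ℝ F] {n : WithTop ℕ∞} {ω : E → F} {y : E}
    (hω : ContDiffAt ℝ n ω y) (h0 : ω y ≠ 0) :
    ContDiffAt ℝ n (fun z => ‖ω z‖⁻¹ • ω z) y :=
  ((hω.norm ℝ h0).inv (norm_ne_zero_iff.2 h0)).smul hω

theorem fderiv_norm_apply_inv_norm_smul_of_div3_eq_zero {ω : E3 → E3} {y : E3}
    (hω : DifferentiableAt ℝ ω y) (hdiv : div3 ω y = 0) (h0 : ω y ≠ 0) :
    fderiv ℝ (fun z => ‖ω z‖) y (‖ω y‖⁻¹ • ω y)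
      = -div3 (fun z => ‖ω z‖⁻¹ • ω z) y * ‖ω y‖ := by
  have hn : ‖ω y‖ ≠ 0 := norm_ne_zero_iff.mpr h0
  have hinv : HasFDerivAt (fun z => ‖ω z‖⁻¹)
      (-(‖ω y‖ ^ 2)⁻¹ • fderiv ℝ (fun z => ‖ω z‖) y) y :=
    (hasDerivAt_inv hn).comp_hasFDerivAt y (hω.norm ℝ h0).hasFDerivAt
  rw [div3_smul hinv.differentiableAt hω, hdiv, hinv.fderiv]
  simp only [smul_apply, map_smul, smul_eq_mul]
  field_simp
  ring

theorem hasDerivAt_norm_comp_of_hasDerivAt_inv_norm_smul {ω : E3 → E3} {x : ℝ → E3} {s : ℝ}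
    (hω : DifferentiableAt ℝ ω (x s)) (hdiv : div3 ω (x s) = 0) (h0 : ω (x s) ≠ 0)
    (hx : HasDerivAt x (‖ω (x s)‖⁻¹ • ω (x s)) s) :
    HasDerivAt (fun t => ‖ω (x t)‖)
      (-div3 (fun y => ‖ω y‖⁻¹ • ω y) (x s) * ‖ω (x s)‖) s := by
  rw [← fderiv_norm_apply_inv_norm_smul_of_div3_eq_zero hω hdiv h0]
  exact (hω.norm ℝ h0).hasFDerivAt.comp_hasDerivAt s hx

theorem eq_mul_exp_neg_integral_of_hasDerivAt {f g : ℝ → ℝ} {a b : ℝ}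
    (hpos : ∀ s ∈ uIcc a b, 0 < f s) (hf : ∀ s ∈ uIcc a b, HasDerivAt f (-g s * f s) s)
    (hg : IntervalIntegrable g volume a b) :
    f b = f a * exp (-∫ s in a..b, g s) := by
  have hlog : ∀ s ∈ uIcc a b, HasDerivAt (fun t => log (f t)) (-g s) s := fun s hs =>
    ((hf s hs).log (hpos s hs).ne').congr_deriv (by field_simp [(hpos s hs).ne'])
  have hint := integral_eq_sub_of_hasDerivAt hlog hg.neg
  rw [intervalIntegral.integral_neg] at hint
  rw [← exp_log (hpos b right_mem_uIcc), ← exp_log (hpos a left_mem_uIcc), ← exp_add]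
  congr 1
  linarith

theorem abs_integral_le_integral_abs_of_mem_Icc {g : ℝ → ℝ} {a b L : ℝ}
    (hg : IntervalIntegrable g volume 0 L) (ha : a ∈ Icc 0 L) (hb : b ∈ Icc 0 L) :
    |∫ s in a..b, g s| ≤ ∫ s in (0:ℝ)..L, |g s| := by
  have hL : 0 ≤ L := ha.1.trans ha.2
  have hsub : uIoc a b ⊆ uIoc 0 L :=
    uIoc_subset_uIoc_of_uIcc_subset_uIcc (by rw [uIcc_of_le hL]; exact uIcc_subset_Icc ha hb)
  calc |∫ s in a..b, g s| ≤ ∫ s in uIoc a b, |g s| := by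
        simpa only [Real.norm_eq_abs] using
          norm_integral_le_integral_norm_uIoc (f := g) (μ := volume)
    _ ≤ ∫ s in uIoc 0 L, |g s| :=
        setIntegral_mono_set hg.norm.def' (ae_of_all _ fun _ => abs_nonneg _) hsub.eventuallyLE
    _ = ∫ s in (0:ℝ)..L, |g s| := by rw [integral_of_le hL, uIoc_of_le hL]

theorem le_exp_mul_of_eq_mul_exp_neg_integral {f g : ℝ → ℝ} {L C a b : ℝ}
    (hf : ∀ t ∈ Icc 0 L, ∀ u ∈ Icc 0 L, f u = f t * exp (-∫ s in t..u, g s))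
    (hg : IntervalIntegrable g volume 0 L) (hC : ∫ s in (0:ℝ)..L, |g s| ≤ C)
    (hfa : 0 ≤ f a) (ha : a ∈ Icc 0 L) (hb : b ∈ Icc 0 L) :
    f b ≤ exp C * f a := by
  rw [hf a ha b hb, mul_comm]
  gcongr
  linarith [neg_le_abs (∫ s in a..b, g s), abs_integral_le_integral_abs_of_mem_Icc hg ha hb]

theorem csSup_image_le_mul_csInf_image {α : Type*} {s : Set α} {f : α → ℝ} {K : ℝ}
    (hs : s.Nonempty) (hK : 0 < K) (h : ∀ a ∈ s, ∀ b ∈ s, f b ≤ K * f a) :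
    sSup (f '' s) ≤ K * sInf (f '' s) := by
  refine csSup_le (hs.image f) (forall_mem_image.2 fun b hb => ?_)
  rw [← div_le_iff₀' hK]
  exact le_csInf (hs.image f) (forall_mem_image.2 fun a ha => by
    rw [div_le_iff₀' hK]; exact h a ha b hb)

theorem csInf_image_Icc_le_average {f : ℝ → ℝ} {a b : ℝ} (hab : a < b)
    (hf : ContinuousOn f (Icc a b)) :
    sInf (f '' Icc a b) ≤ (b - a)⁻¹ * ∫ s in a..b, f s := by
  have hbdd := (isCompact_Icc.image_of_continuousOn hf).bddBelow
  have hmono : ∫ _ in a..b, sInf (f '' Icc a b) ≤ ∫ s in a..b, f s :=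
    integral_mono_on hab.le intervalIntegrable_const (hf.intervalIntegrable_of_Icc hab.le)
      fun s hs => csInf_le hbdd (mem_image_of_mem f hs)
  rw [intervalIntegral.integral_const, smul_eq_mul] at hmono
  rw [inv_mul_eq_div, le_div_iff₀ (sub_pos.2 hab)]
  linarith

/-- **Deng–Hou–Yu's Lemma 1 identity and the paper's inequality (2.20).**
For a divergence-free `C¹` field `ω` and a vortex line segment `x(s)`, `0 ≤ s ≤ L`,
parameterized by arclength (`x' = ξ(x(s))`, `ξ = ω/|ω|`, `ω ≠ 0` along it):
(i) `|ω(x(s₂))| = |ω(x(s₁))| exp(−∫_{s₁}^{s₂} (∇·ξ)(x(s)) ds)`;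
(ii) if `∫₀^L |(∇·ξ)(x(s))| ds ≤ C₀` then
`max |ω| ≤ e^{C₀} min |ω| ≤ e^{C₀} (1/L) ∫₀^L |ω(x(s))| ds` along the segment. -/
theorem stmt17
    (ω : E3 → E3) (hω : ContDiff ℝ 1 ω)
    (hdiv : ∀ y : E3, div3 ω y = 0)
    (L : ℝ) (hL : 0 < L) (x : ℝ → E3)
    (hx : ∀ s ∈ Icc (0:ℝ) L, HasDerivAt x (‖ω (x s)‖⁻¹ • ω (x s)) s)
    (hne : ∀ s ∈ Icc (0:ℝ) L, ω (x s) ≠ 0) :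
    (∀ s₁ s₂ : ℝ, 0 ≤ s₁ → s₁ ≤ s₂ → s₂ ≤ L →
      ‖ω (x s₂)‖ = ‖ω (x s₁)‖ *
        Real.exp (-∫ s in s₁..s₂, div3 (fun y => ‖ω y‖⁻¹ • ω y) (x s)))
    ∧ (∀ C₀ : ℝ, (∫ s in (0:ℝ)..L, |div3 (fun y => ‖ω y‖⁻¹ • ω y) (x s)|) ≤ C₀ →
        sSup ((fun s => ‖ω (x s)‖) '' Icc 0 L)
          ≤ Real.exp C₀ * sInf ((fun s => ‖ω (x s)‖) '' Icc 0 L)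
        ∧ Real.exp C₀ * sInf ((fun s => ‖ω (x s)‖) '' Icc 0 L)
          ≤ Real.exp C₀ * ((1 / L) * ∫ s in (0:ℝ)..L, ‖ω (x s)‖)) := by
  have hxc : ContinuousOn x (Icc 0 L) := fun s hs => (hx s hs).continuousAt.continuousWithinAt
  have hpos : ∀ s ∈ Icc 0 L, 0 < ‖ω (x s)‖ := fun s hs => norm_pos_iff.2 (hne s hs)
  have hderiv : ∀ s ∈ Icc 0 L, HasDerivAt (fun t => ‖ω (x t)‖)
      (-div3 (fun y => ‖ω y‖⁻¹ • ω y) (x s) * ‖ω (x s)‖) s := fun s hs =>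
    hasDerivAt_norm_comp_of_hasDerivAt_inv_norm_smul (hω.differentiable one_ne_zero _) (hdiv _)
      (hne s hs) (hx s hs)
  have hdivξ : ContinuousOn (fun s => div3 (fun y => ‖ω y‖⁻¹ • ω y) (x s)) (Icc 0 L) :=
    fun s hs => (continuousAt_div3 (contDiffAt_inv_norm_smul hω.contDiffAt (hne s hs))
      |>.comp_continuousWithinAt (hxc s hs))
  have hid : ∀ a ∈ Icc 0 L, ∀ b ∈ Icc 0 L, ‖ω (x b)‖ = ‖ω (x a)‖ *
      exp (-∫ s in a..b, div3 (fun y => ‖ω y‖⁻¹ • ω y) (x s)) := fun a ha b hb =>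
    have hsub : uIcc a b ⊆ Icc 0 L := uIcc_subset_Icc ha hb
    eq_mul_exp_neg_integral_of_hasDerivAt (fun s hs => hpos s (hsub hs))
      (fun s hs => hderiv s (hsub hs)) ((hdivξ.mono hsub).intervalIntegrable)
  refine ⟨fun s₁ s₂ h0 h12 h2L => hid s₁ ⟨h0, h12.trans h2L⟩ s₂ ⟨h0.trans h12, h2L⟩,
    fun C₀ hC₀ => ⟨?_, ?_⟩⟩
  · have hdivξ_int := hdivξ.intervalIntegrable_of_Icc (μ := volume) hL.le
    exact csSup_image_le_mul_csInf_image (nonempty_Icc.2 hL.le) (exp_pos C₀) fun a ha b hb =>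
      le_exp_mul_of_eq_mul_exp_neg_integral hid hdivξ_int hC₀ (hpos a ha).le ha hb
  · gcongr
    simpa [one_div] using
      csInf_image_Icc_le_average hL ((hω.continuous.norm).comp_continuousOn hxc)
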